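/- arXiv:cs/0306041 — 12 statements merged into one kernel-verified Lean document; each statement's English description precedes it below -/
import Mathlib

section
/- Let Φ be a set of first-order temporal formulae, P a unary predicate, L a unary literal, and waitforL a fresh unary predicate not occurring in Φ, P, or L. Then Φ ∪ {□∀x (P(x) → ◇L(x))} is satisfiable if and only if Φ ∪ {□∀x ((P(x) ∧ ¬L(x)) → waitforL(x)), □∀x ((waitforL(x) ∧ ○¬L(x)) → ○waitforL(x)), □∀x ◇¬waitforL(x)} is satisfiable. -/
/-- Removing conditional eventualities (Lemma 1, "unconditioning").
A temporal model is given semantically by a nonempty domain `D` together with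
time-dependent interpretations of the unary predicates `P`, `L` (and of the fresh
predicate `waitforL`).  The set `Φ` of first-order temporal formulae is represented
by its semantic truth condition `Φ D P L` (truth at moment 0); since `waitforL`
is fresh (does not occur in `Φ`, `P`, `L`), `Φ` does not depend on its
interpretation.  `□∀x (P(x) → ◇L(x))` at moment 0 reads: for all `n` and `d`,
`P n d` implies `L m d` for some `m ≥ n`. -/
theorem unconditional_eventuality_reduction
    (Φ : ∀ D : Type, (ℕ → D → Prop) → (ℕ → D → Prop) → Prop) :
    (∃ (D : Type) (_ : Nonempty D) (P L : ℕ → D → Prop),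
        Φ D P L ∧ (∀ (n : ℕ) (d : D), P n d → ∃ m, n ≤ m ∧ L m d)) ↔
    (∃ (D : Type) (_ : Nonempty D) (P L waitforL : ℕ → D → Prop),
        Φ D P L ∧
        (∀ (n : ℕ) (d : D), P n d ∧ ¬ L n d → waitforL n d) ∧
        (∀ (n : ℕ) (d : D), waitforL n d ∧ ¬ L (n+1) d → waitforL (n+1) d) ∧
        (∀ (n : ℕ) (d : D), ∃ m, n ≤ m ∧ ¬ waitforL m d)) := by
  constructor
  · rintro ⟨D, hD, P, L, hΦ, hPL⟩
    refine ⟨D, hD, P, L,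
      fun n d => ∃ k, k ≤ n ∧ P k d ∧ ∀ j, k ≤ j → j ≤ n → ¬ L j d,
      hΦ, ?_, ?_, ?_⟩
    · rintro n d ⟨hP, hL⟩
      exact ⟨n, le_refl n, hP, fun j hj hj' h => hL (by
        have : j = n := le_antisymm hj' hj
        rwa [this] at h)⟩
    · rintro n d ⟨⟨k, hk, hP, hnoL⟩, hL⟩
      refine ⟨k, hk.trans (Nat.le_succ n), hP, fun j hj hj' h => ?_⟩
      rcases Nat.lt_or_ge j (n+1) with h1 | h1
      · exact hnoL j hj (Nat.lt_succ_iff.mp h1) h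
      · have : j = n + 1 := le_antisymm hj' h1
        exact hL (this ▸ h)
    · intro n d
      by_contra hcon
      push_neg at hcon
      obtain ⟨k, hk, hP, hnoL⟩ := hcon n (le_refl n)
      obtain ⟨m, hm, hLm⟩ := hPL k d hP
      rcases Nat.lt_or_ge n m with h1 | h1
      · obtain ⟨k', hk', _, hnoL'⟩ := hcon m h1.le
        exact hnoL' m hk' (le_refl m) hLm
      · exact hnoL m hm h1 hLm
  · rintro ⟨D, hD, P, L, W, hΦ, h1, h2, h3⟩
    refine ⟨D, hD, P, L, hΦ, fun n d hP => ?_⟩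
    by_contra hcon
    push_neg at hcon
    have hW : ∀ m, n ≤ m → W m d := by
      intro m hm
      induction m with
      | zero =>
        have : n = 0 := Nat.le_zero.mp hm
        exact h1 0 d ⟨this ▸ hP, hcon 0 hm⟩
      | succ m ih =>
        rcases Nat.lt_or_ge n (m+1) with h4 | h4
        · exact h2 m d ⟨ih (Nat.lt_succ_iff.mp h4), hcon (m+1) hm⟩
        · have : n = m + 1 := le_antisymm hm h4
          exact h1 (m+1) d ⟨this ▸ hP, hcon (m+1) hm⟩
    obtain ⟨m, hm, hWm⟩ := h3 n d
    exact hWm (hW m hm)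
end

section
/- The formula □∀x (P(x) → □φ(x)) is satisfiable if and only if the conjunction □∀x (P(x) → R(x)) ∧ □∀x (R(x) → ○R(x)) ∧ □∀x (R(x) → φ(x)) is satisfiable, where R is a fresh unary predicate not occurring in P or φ. -/
/-- Fixed-point removal of `□`: `□∀x (P(x) → □φ(x))` is satisfiable iff
`□∀x (P(x) → R(x)) ∧ □∀x (R(x) → ○R(x)) ∧ □∀x (R(x) → φ(x))` is satisfiable,
where `R` is fresh (not occurring in `P`, `φ`, nor in the surrounding theory `Φ`).
Models are given semantically: a nonempty constant domain `D` and time-dependent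
interpretations of `P`, `φ` (and `R`); the surrounding theory `Φ` is represented by
its truth condition `Φ D P φ`, which does not depend on `R` since `R` is fresh. -/
theorem box_fixedpoint_removal
    (Φ : ∀ D : Type, (ℕ → D → Prop) → (ℕ → D → Prop) → Prop) :
    (∃ (D : Type) (_ : Nonempty D) (P φ : ℕ → D → Prop),
        Φ D P φ ∧ (∀ (n : ℕ) (d : D), P n d → ∀ m, n ≤ m → φ m d)) ↔
    (∃ (D : Type) (_ : Nonempty D) (P φ R : ℕ → D → Prop),
        Φ D P φ ∧
        (∀ (n : ℕ) (d : D), P n d → R n d) ∧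
        (∀ (n : ℕ) (d : D), R n d → R (n+1) d) ∧
        (∀ (n : ℕ) (d : D), R n d → φ n d)) := by
  constructor
  · rintro ⟨D, hD, P, φ, hΦ, h⟩
    refine ⟨D, hD, P, φ, fun n d => ∃ m, m ≤ n ∧ P m d, hΦ, ?_, ?_, ?_⟩
    · exact fun n d hp => ⟨n, le_refl n, hp⟩
    · rintro n d ⟨m, hm, hp⟩; exact ⟨m, hm.trans (Nat.le_succ n), hp⟩
    · rintro n d ⟨m, hm, hp⟩; exact h m d hp n hm
  · rintro ⟨D, hD, P, φ, R, hΦ, h1, h2, h3⟩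
    refine ⟨D, hD, P, φ, hΦ, fun n d hp m hm => ?_⟩
    have : R m d := by
      induction m with
      | zero => exact Nat.le_zero.mp hm ▸ h1 n d hp
      | succ k ih =>
        rcases Nat.lt_or_ge n (k+1) with hlt | hge
        · exact h2 k d (ih (Nat.lt_succ_iff.mp hlt))
        · exact Nat.le_antisymm hm hge ▸ h1 n d hp
    exact h3 m d this
end

section
/- Soundness of the step resolution rule: let M be a temporal model, let A ⟹ ○B be a formula with A, B closed first-order formulae such that M satisfies □(A → ○B), and suppose U ∪ {B} is unsatisfiable (in classical first-order logic) where M satisfies □U. Then M satisfies □¬A. -/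
/-- Soundness of the step resolution rule.  `Struct` is the type of classical
first-order structures (over the signature at hand); closed first-order formulae
are represented semantically as predicates `Struct → Prop`, and a temporal model
is a sequence of states `M : ℕ → Struct` over a constant domain.  If `M` satisfies
`□U` and `□(A → ○B)`, and `U ∪ {B}` is classically unsatisfiable, then `M ⊨ □¬A`. -/
theorem step_resolution_sound
    (Struct : Type) (U : Set (Struct → Prop)) (A B : Struct → Prop)
    (M : ℕ → Struct)
    (hU : ∀ n : ℕ, ∀ u ∈ U, u (M n))
    (hstep : ∀ n : ℕ, A (M n) → B (M (n+1)))
    (hunsat : ¬ ∃ s : Struct, (∀ u ∈ U, u s) ∧ B s) :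
    ∀ n : ℕ, ¬ A (M n) := by
  intro n hA
  exact hunsat ⟨M (n+1), hU (n+1), hstep n hA⟩
end

section
/- Soundness of the ground eventuality resolution rule: let M be a temporal model satisfying □U for a set U of closed first-order formulae, and let A_i ⟹ ○B_i (i = 1,…,n) be clauses with A_i, B_i closed formulae such that M ⊨ □(A_i → ○B_i) for each i. Let l be a propositional atom (or its negation) with M ⊨ □◇l. Suppose for each i, U ∧ B_i ⊨ ¬l and U ∧ B_i ⊨ ⋁_{j=1}^n A_j (classical first-order entailment). Then M ⊨ □(⋀_{i=1}^n ¬A_i). -/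
/-- Soundness of the ground eventuality resolution rule.  `Struct` is the type of
classical first-order structures; closed formulae are predicates `Struct → Prop`;
`M : ℕ → Struct` is a temporal model.  Suppose `M ⊨ □U`, `M ⊨ □(Aᵢ → ○Bᵢ)` for
`i = 1,…,n`, and `M ⊨ □◇l` for a ground literal `l`, and the classical entailments
`U ∧ Bᵢ ⊨ ¬l` and `U ∧ Bᵢ ⊨ ⋁ⱼ Aⱼ` hold for each `i`.  Then `M ⊨ □⋀ᵢ ¬Aᵢ`. -/
theorem ground_eventuality_resolution_sound
    (Struct : Type) (n : ℕ) (U : Set (Struct → Prop))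
    (A B : Fin n → Struct → Prop) (l : Struct → Prop)
    (M : ℕ → Struct)
    (hU : ∀ t : ℕ, ∀ u ∈ U, u (M t))
    (hstep : ∀ (i : Fin n) (t : ℕ), A i (M t) → B i (M (t+1)))
    (hev : ∀ t : ℕ, ∃ m, t ≤ m ∧ l (M m))
    (hside1 : ∀ (i : Fin n) (s : Struct), (∀ u ∈ U, u s) → B i s → ¬ l s)
    (hside2 : ∀ (i : Fin n) (s : Struct), (∀ u ∈ U, u s) → B i s → ∃ j, A j s) :
    ∀ (t : ℕ) (i : Fin n), ¬ A i (M t) := by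
  intro t i hA
  have key : ∀ k : ℕ, ∃ j, B j (M (t + 1 + k)) := by
    intro k
    induction k with
    | zero => exact ⟨i, hstep i t hA⟩
    | succ k ih =>
      obtain ⟨j, hBj⟩ := ih
      obtain ⟨j', hAj'⟩ := hside2 j _ (hU _) hBj
      exact ⟨j', hstep j' _ hAj'⟩
  obtain ⟨m, hm, hl⟩ := hev (t + 1)
  obtain ⟨k, rfl⟩ := Nat.exists_eq_add_of_le hm
  obtain ⟨j, hBj⟩ := key k
  exact hside1 j _ (hU _) hBj hl
end

section
/- Soundness of the (non-ground) eventuality resolution rule: let M be a temporal model satisfying □U, and for i = 1,…,n let M ⊨ □∀x (A_i ∧ A_i(x) → ○(B_i ∧ B_i(x))) where A_i, B_i are closed formulae and A_i(x), B_i(x) have at most the free variable x. Let L(x) be a unary literal with M ⊨ □∀x ◇L(x). Suppose for every i, the formulae ∀x (U ∧ B_i ∧ B_i(x) → ¬L(x)) and ∀x (U ∧ B_i ∧ B_i(x) → ⋁_{j=1}^n (A_j ∧ A_j(x))) are valid. Then M ⊨ □∀x ⋀_{i=1}^n (¬A_i ∨ ¬A_i(x)). -/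
/-- Soundness of the (non-ground) eventuality resolution rule.  `Struct` is the
type of classical first-order structures over the constant domain `D`; closed
formulae are predicates `Struct → Prop`, formulae with at most one free variable
are `Struct → D → Prop`.  `M : ℕ → Struct` is a temporal model with domain `D`.
Given full merged step clauses `∀x (𝒜ᵢ ∧ Aᵢ(x) → ○(ℬᵢ ∧ Bᵢ(x)))` true in `M`,
`M ⊨ □U`, `M ⊨ □∀x◇L(x)`, and the valid loop side conditions, we conclude
`M ⊨ □∀x ⋀ᵢ (¬𝒜ᵢ ∨ ¬Aᵢ(x))`. -/
theorem eventuality_resolution_sound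
    (Struct : Type) (D : Type) (n : ℕ)
    (U : Set (Struct → Prop))
    (cA cB : Fin n → Struct → Prop)
    (A B : Fin n → Struct → D → Prop)
    (L : Struct → D → Prop)
    (M : ℕ → Struct)
    (hU : ∀ t : ℕ, ∀ u ∈ U, u (M t))
    (hstep : ∀ (i : Fin n) (t : ℕ) (d : D),
        cA i (M t) ∧ A i (M t) d → cB i (M (t+1)) ∧ B i (M (t+1)) d)
    (hev : ∀ (t : ℕ) (d : D), ∃ m, t ≤ m ∧ L (M m) d)
    (hside1 : ∀ (i : Fin n) (s : Struct) (d : D),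
        (∀ u ∈ U, u s) → cB i s ∧ B i s d → ¬ L s d)
    (hside2 : ∀ (i : Fin n) (s : Struct) (d : D),
        (∀ u ∈ U, u s) → cB i s ∧ B i s d → ∃ j, cA j s ∧ A j s d) :
    ∀ (t : ℕ) (d : D) (i : Fin n), ¬ (cA i (M t) ∧ A i (M t) d) := by
  intro t d i hA
  have key : ∀ k : ℕ, ∃ j, cB j (M (t+1+k)) ∧ B j (M (t+1+k)) d := by
    intro k
    induction k with
    | zero => exact ⟨i, hstep i t d hA⟩
    | succ k ih =>
      obtain ⟨j, hj⟩ := ih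
      obtain ⟨j', hj'⟩ := hside2 j (M (t+1+k)) d (hU _) hj
      exact ⟨j', by have := hstep j' (t+1+k) d hj'; rwa [Nat.add_succ] ⟩
  obtain ⟨m, hm, hL⟩ := hev (t+1) d
  obtain ⟨j, hj⟩ := key (m - (t+1))
  rw [Nat.add_sub_cancel' hm] at hj
  exact hside1 j (M m) d (hU m) hj hL
end

section
/- Let H be the behaviour graph of a monodic temporal problem P = ⟨U, I, S, E⟩ with an edge from vertex C = (Γ, θ, ρ) to vertex C′ = (Γ′, θ′, ρ′). Then: (1) for every γ ∈ Γ there exists γ′ ∈ Γ′ such that (γ, γ′) is suitable; (2) for every γ′ ∈ Γ′ there exists γ ∈ Γ such that (γ, γ′) is suitable; (3) the pair (θ, θ′) of propositional colours is suitable; (4) the pair (ρ, ρ′) of constant distributions is suitable. -/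
/-- A classical first-order structure for a monodic temporal problem whose
temporal part uses unary predicates `P₁,…,P_N`, propositions `p₁,…,p_np`
and constants from `Con` (plus further symbols, absorbed into the set of
universal formulae, which are represented semantically). -/
structure FOStruct (N np : ℕ) (Con : Type) : Type 1 where
  D : Type
  ne : Nonempty D
  pred : Fin N → D → Prop
  prp : Fin np → Prop
  con : Con → D

/-- A predicate colour `γ` is represented as `Fin N → Bool`: `γ i = true` means
the literal `Pᵢ(x)` belongs to `γ`, `γ i = false` means `¬Pᵢ(x) ∈ γ`.
`Fgamma γ s d` is the truth of `F_γ(x) = ⋀_{L(x)∈γ} L(x)` at element `d`. -/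
def Fgamma {N np : ℕ} {Con : Type} (γ : Fin N → Bool)
    (s : FOStruct N np Con) (d : s.D) : Prop :=
  ∀ i, s.pred i d ↔ γ i = true

/-- Truth of `F_θ = ⋀_{l∈θ} l` for a propositional colour `θ`. -/
def Ftheta {N np : ℕ} {Con : Type} (θ : Fin np → Bool)
    (s : FOStruct N np Con) : Prop :=
  ∀ j, s.prp j ↔ θ j = true

/-- Non-ground step clauses `L(x) ⟹ ○M(x)`: pairs of unary literals,
a literal being a predicate index together with a sign. -/
abbrev NGStepClauses (N : ℕ) := Set ((Fin N × Bool) × (Fin N × Bool))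

/-- Ground step clauses `l ⟹ ○m`: pairs of propositional literals. -/
abbrev GStepClauses (np : ℕ) := Set ((Fin np × Bool) × (Fin np × Bool))

/-- Truth of a unary literal at an element. -/
def litP {N np : ℕ} {Con : Type} (s : FOStruct N np Con)
    (l : Fin N × Bool) (d : s.D) : Prop :=
  s.pred l.1 d ↔ l.2 = true

/-- Truth of a propositional literal. -/
def litp {N np : ℕ} {Con : Type} (s : FOStruct N np Con)
    (l : Fin np × Bool) : Prop :=
  s.prp l.1 ↔ l.2 = true

/-- `B_γ(x)`: the conjunction of the right-hand sides `M(x)` of the step clauses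
`L(x) ⟹ ○M(x)` whose left-hand side literal `L(x)` belongs to `γ`. -/
def Bgamma {N np : ℕ} {Con : Type} (Snon : NGStepClauses N)
    (γ : Fin N → Bool) (s : FOStruct N np Con) (d : s.D) : Prop :=
  ∀ cl ∈ Snon, γ cl.1.1 = cl.1.2 → litP s cl.2 d

/-- `B_θ`: the conjunction of the right-hand sides of ground step clauses whose
left-hand side belongs to `θ`. -/
def Btheta {N np : ℕ} {Con : Type} (Sg : GStepClauses np)
    (θ : Fin np → Bool) (s : FOStruct N np Con) : Prop :=
  ∀ cl ∈ Sg, θ cl.1.1 = cl.1.2 → litp s cl.2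

/-- A colour scheme `(Γ, θ, ρ)`: a set of predicate colours, a propositional
colour and a constant distribution `ρ : Con → Γ`. -/
structure CScheme (N np : ℕ) (Con : Type) where
  Γ : Set (Fin N → Bool)
  θ : Fin np → Bool
  ρ : Con → Fin N → Bool
  hρ : ∀ c, ρ c ∈ Γ

/-- The "categorical" formula
`F_C = ⋀_{γ∈Γ} ∃x F_γ(x) ∧ F_θ ∧ ⋀_{c} F_{ρ(c)}(c) ∧ ∀x ⋁_{γ∈Γ} F_γ(x)`. -/
def FC {N np : ℕ} {Con : Type} (C : CScheme N np Con)
    (s : FOStruct N np Con) : Prop :=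
  (∀ γ ∈ C.Γ, ∃ d, Fgamma γ s d) ∧ Ftheta C.θ s ∧
  (∀ c, Fgamma (C.ρ c) s (s.con c)) ∧ (∀ d, ∃ γ ∈ C.Γ, Fgamma γ s d)

/-- The formula
`B_C = ⋀_{γ∈Γ} ∃x B_γ(x) ∧ B_θ ∧ ⋀_{c} B_{ρ(c)}(c) ∧ ∀x ⋁_{γ∈Γ} B_γ(x)`. -/
def BC {N np : ℕ} {Con : Type} (Snon : NGStepClauses N) (Sg : GStepClauses np)
    (C : CScheme N np Con) (s : FOStruct N np Con) : Prop :=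
  (∀ γ ∈ C.Γ, ∃ d, Bgamma Snon γ s d) ∧ Btheta Sg C.θ s ∧
  (∀ c, Bgamma Snon (C.ρ c) s (s.con c)) ∧ (∀ d, ∃ γ ∈ C.Γ, Bgamma Snon γ s d)

/-- All formulae of the (current) universal part hold in `s`. -/
def holdsU {N np : ℕ} {Con : Type} (U : Set (FOStruct N np Con → Prop))
    (s : FOStruct N np Con) : Prop :=
  ∀ u ∈ U, u s

/-- A pair of predicate colours `(γ, γ′)` is suitable iff
`U ∧ ∃x (F_{γ′}(x) ∧ B_γ(x))` is satisfiable. -/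
def suitableP {N np : ℕ} {Con : Type} (U : Set (FOStruct N np Con → Prop))
    (Snon : NGStepClauses N) (γ γ' : Fin N → Bool) : Prop :=
  ∃ s : FOStruct N np Con, holdsU U s ∧ ∃ d, Fgamma γ' s d ∧ Bgamma Snon γ s d

/-- A pair of propositional colours `(θ, θ′)` is suitable iff
`U ∧ F_{θ′} ∧ B_θ` is satisfiable. -/
def suitableTheta {N np : ℕ} {Con : Type} (U : Set (FOStruct N np Con → Prop))
    (Sg : GStepClauses np) (θ θ' : Fin np → Bool) : Prop :=
  ∃ s : FOStruct N np Con, holdsU U s ∧ Ftheta θ' s ∧ Btheta Sg θ s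

/-- Lemma 3: if the behaviour graph of `P = ⟨U, I, S, E⟩` has an edge from
`C = (Γ, θ, ρ)` to `C′ = (Γ′, θ′, ρ′)` (both are vertices, i.e. `U ∪ {F_C}` is
satisfiable, and `U ∧ F_{C′} ∧ B_C` is satisfiable), then: (1) every `γ ∈ Γ` has a
suitable partner `γ′ ∈ Γ′`; (2) every `γ′ ∈ Γ′` has a suitable partner `γ ∈ Γ`;
(3) `(θ, θ′)` is suitable; (4) the constant distributions are suitable. -/
theorem behaviour_graph_edge_suitability
    (N np : ℕ) (Con : Type)
    (Snon : NGStepClauses N) (Sg : GStepClauses np)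
    (U : Set (FOStruct N np Con → Prop))
    (C C' : CScheme N np Con)
    (hC : ∃ s : FOStruct N np Con, holdsU U s ∧ FC C s)
    (hC' : ∃ s : FOStruct N np Con, holdsU U s ∧ FC C' s)
    (hedge : ∃ s : FOStruct N np Con, holdsU U s ∧ FC C' s ∧ BC Snon Sg C s) :
    (∀ γ ∈ C.Γ, ∃ γ' ∈ C'.Γ, suitableP U Snon γ γ') ∧
    (∀ γ' ∈ C'.Γ, ∃ γ ∈ C.Γ, suitableP U Snon γ γ') ∧
    suitableTheta U Sg C.θ C'.θ ∧
    (∀ c : Con, suitableP U Snon (C.ρ c) (C'.ρ c)) := by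
  obtain ⟨s, hU, hF, hB⟩ := hedge
  refine ⟨?_, ?_, ⟨s, hU, hF.2.1, hB.2.1⟩, fun c => ⟨s, hU, s.con c, hF.2.2.1 c, hB.2.2.1 c⟩⟩
  · intro γ hγ
    obtain ⟨d, hd⟩ := hB.1 γ hγ
    obtain ⟨γ', hγ', hγ'd⟩ := hF.2.2.2 d
    exact ⟨γ', hγ', s, hU, d, hγ'd, hd⟩
  · intro γ' hγ'
    obtain ⟨d, hd⟩ := hF.1 γ' hγ'
    obtain ⟨γ, hγ, hγd⟩ := hB.2.2.2 d
    exact ⟨γ, hγ, s, hU, d, hd, hγd⟩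
end

section
/- Termination of the BFS loop-search algorithm: since there are only finitely many logically distinct formulae H_i(x) that can be produced (the left-hand sides are disjunctions over a finite set of possible full merged step clauses), and the sequence H_i(x) is monotonically weakening (∀x (H_{i+1}(x) → H_i(x)) for all i), the algorithm terminates: either some H_k(x) ≡ false and the algorithm returns false, or there exists m with ∀x (H_{m-1}(x) → H_m(x)) and the algorithm returns H_m(x). -/
/-- The iterates `H_i(x)` of the breadth-first loop search (BFS) algorithm for an
eventuality `◇L(x)`.  `Struct` is the type of classical first-order structures
over the constant domain `D`; `Clause` indexes the (finitely many) possible full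
merged step clauses `∀x (A_c(x) → ○B_c(x))`, whose left- and right-hand sides are
the formulae `A c` and `B c` (the closed merged parts are absorbed); `U` is the
conjunction of the universal part and `L` the eventuality literal.
`H 0 = true`, and `H (i+1)(x)` is the disjunction of the left-hand sides of all
full merged step clauses `c` such that `∀x (U ∧ B_c(x) → ¬L(x) ∧ H_i(x))` is
valid (the set `N_{i+1}`). -/
def Hbfs (Struct D Clause : Type) (A B : Clause → Struct → D → Prop)
    (U : Struct → Prop) (L : Struct → D → Prop) : ℕ → Struct → D → Prop
  | 0 => fun _ _ => True
  | i + 1 => fun s d =>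
      ∃ c : Clause,
        (∀ (s' : Struct) (d' : D),
            U s' ∧ B c s' d' → ¬ L s' d' ∧ Hbfs Struct D Clause A B U L i s' d') ∧
        A c s d

/-- The set `N_{i+1}` of all full merged step clauses `c` such that
`∀x (U ∧ B_c(x) → ¬L(x) ∧ H_i(x))` is valid. -/
def NbfsSucc (Struct D Clause : Type) (A B : Clause → Struct → D → Prop)
    (U : Struct → Prop) (L : Struct → D → Prop) (i : ℕ) : Set Clause :=
  {c | ∀ (s : Struct) (d : D),
      U s ∧ B c s d → ¬ L s d ∧ Hbfs Struct D Clause A B U L i s d}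

/-- Lemma 5 (termination of the BFS algorithm): since there are only finitely many
full merged step clauses and the iterates weaken monotonically, the algorithm
terminates: either some `N_{k+1}` is empty (the algorithm returns `false`), or
there is an `m` with `∀x (H_m(x) → H_{m+1}(x))` valid (the algorithm returns
`H_{m+1}(x)`). -/
theorem bfs_terminates
    (Struct D Clause : Type) [Finite Clause]
    (A B : Clause → Struct → D → Prop)
    (U : Struct → Prop) (L : Struct → D → Prop) :
    (∃ k : ℕ, NbfsSucc Struct D Clause A B U L k = ∅) ∨
    (∃ m : ℕ, ∀ (s : Struct) (d : D),
        Hbfs Struct D Clause A B U L m s d →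
        Hbfs Struct D Clause A B U L (m+1) s d) := by
  -- H is antitone
  have Hanti : ∀ i s d, Hbfs Struct D Clause A B U L (i+1) s d →
      Hbfs Struct D Clause A B U L i s d := by
    intro i
    induction i with
    | zero => intro s d _; trivial
    | succ j ih =>
      rintro s d ⟨c, hc, hA⟩
      exact ⟨c, fun s' d' h => ⟨(hc s' d' h).1, ih s' d' (hc s' d' h).2⟩, hA⟩
  -- N is antitone
  have Nanti : ∀ i, NbfsSucc Struct D Clause A B U L (i+1) ⊆
      NbfsSucc Struct D Clause A B U L i := by
    intro i c hc s d h
    exact ⟨(hc s d h).1, Hanti i s d (hc s d h).2⟩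
  by_contra hcon
  push_neg at hcon
  obtain ⟨hne, hmono⟩ := hcon
  -- if N i = N (i+1) then H (i+1) → H (i+2)
  have key : ∀ i, NbfsSucc Struct D Clause A B U L i ≠ NbfsSucc Struct D Clause A B U L (i+1) := by
    intro i heq
    obtain ⟨s, d, h1, h2⟩ := hmono (i+1)
    obtain ⟨c, hc, hA⟩ := h1
    have hc' : c ∈ NbfsSucc Struct D Clause A B U L (i+1) := heq ▸ hc
    exact h2 ⟨c, hc', hA⟩
  -- strictly decreasing ncard
  have hfin : ∀ i, (NbfsSucc Struct D Clause A B U L i).Finite := fun i => Set.toFinite _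
  have hlt : ∀ i, (NbfsSucc Struct D Clause A B U L (i+1)).ncard <
      (NbfsSucc Struct D Clause A B U L i).ncard := by
    intro i
    exact Set.ncard_lt_ncard (lt_of_le_of_ne (Nanti i) (fun h => key i h.symm)) (hfin i)
  have hdec : ∀ n, (NbfsSucc Struct D Clause A B U L n).ncard + n ≤
      (NbfsSucc Struct D Clause A B U L 0).ncard := by
    intro n
    induction n with
    | zero => simp
    | succ j ih => have := hlt j; omega
  have := hdec ((NbfsSucc Struct D Clause A B U L 0).ncard + 1)
  omega
end

section
/- Correctness of BFS output as a loop formula: if H(x) is the formula returned by the BFS loop-search algorithm on eventuality ◇L(x) and H(x) is not false, then □∀x (U ∧ H(x) → ○□¬L(x)) holds; that is, the final set N of full merged step clauses forms a loop in ◇L(x): for every clause ∀x (A_j(x) → ○B_j(x)) in N, both ∀x (U ∧ B_j(x) → ¬L(x)) and ∀x (U ∧ B_j(x) → H(x)) are valid, where H(x) = ⋁_j A_j(x). -/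
/-- Lemma 6 (correctness of the BFS output as a loop formula): suppose the BFS
algorithm terminates at stage `i+1`, returning `H(x) = H_{i+1}(x)` (so
`∀x (H_i(x) → H_{i+1}(x))` is valid) and `H(x)` is not `false`.  Then the final
set `N_{i+1}` forms a loop in `◇L(x)`: for every clause `c ∈ N_{i+1}` both
`∀x (U ∧ B_c(x) → ¬L(x))` and `∀x (U ∧ B_c(x) → H(x))` are valid; consequently,
in every temporal model `M` satisfying `□U` and the full merged step clauses,
`□∀x (U ∧ H(x) → ○□¬L(x))` holds: whenever `H(x)` is true of `d` at moment `t`,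
`L` is false of `d` at all moments `> t`. -/
theorem bfs_output_is_loop
    (Struct D Clause : Type) (A B : Clause → Struct → D → Prop)
    (U : Struct → Prop) (L : Struct → D → Prop) (i : ℕ)
    (hterm : ∀ (s : Struct) (d : D),
        Hbfs Struct D Clause A B U L i s d → Hbfs Struct D Clause A B U L (i+1) s d)
    (hne : ¬ ∀ (s : Struct) (d : D), ¬ Hbfs Struct D Clause A B U L (i+1) s d) :
    (∀ c ∈ NbfsSucc Struct D Clause A B U L i,
        (∀ (s : Struct) (d : D), U s ∧ B c s d → ¬ L s d) ∧
        (∀ (s : Struct) (d : D), U s ∧ B c s d → Hbfs Struct D Clause A B U L (i+1) s d)) ∧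
    (∀ M : ℕ → Struct, (∀ t, U (M t)) →
        (∀ (c : Clause) (t : ℕ) (d : D), A c (M t) d → B c (M (t+1)) d) →
        ∀ (t : ℕ) (d : D), Hbfs Struct D Clause A B U L (i+1) (M t) d →
          ∀ m, t < m → ¬ L (M m) d) := by
  constructor
  · intro c hc
    exact ⟨fun s d h => (hc s d h).1, fun s d h => hterm s d (hc s d h).2⟩
  · intro M hU hstep t d hH m htm
    -- strengthen: for all m > t, ¬L ∧ H_{i+1}
    suffices h : ∀ m, t < m → ¬ L (M m) d ∧ Hbfs Struct D Clause A B U L (i+1) (M m) d from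
      (h m htm).1
    intro m htm
    induction m with
    | zero => omega
    | succ k ih =>
      rcases Nat.lt_or_ge t k with hk | hk
      · obtain ⟨hL, c, hc, hA⟩ := ih hk
        have hB := hstep c k d hA
        have := hc (M (k+1)) d ⟨hU (k+1), hB⟩
        exact ⟨this.1, hterm _ _ this.2⟩
      · have : t = k := by omega
        subst this
        obtain ⟨c, hc, hA⟩ := hH
        have hB := hstep c t d hA
        have := hc (M (t+1)) d ⟨hU (t+1), hB⟩
        exact ⟨this.1, hterm _ _ this.2⟩
end

section
/- Maximality of the BFS loop formula: let P be a monodic temporal problem, ◇L(x) an eventuality clause, and let 𝓛 be any loop in ◇L(x) with loop formula 𝐋(x). If H(x) is the formula produced by the BFS algorithm on ◇L(x), then ∀x (𝐋(x) → H(x)) is valid. -/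
/-- Lemma 7 (maximality of the BFS loop formula): let `𝓛` be any loop in `◇L(x)`,
i.e. a set of full merged step clauses such that for every `c ∈ 𝓛` the side
conditions `∀x (U ∧ B_c(x) → ¬L(x))` and `∀x (U ∧ B_c(x) → 𝐋(x))` are valid,
where `𝐋(x) = ⋁_{c∈𝓛} A_c(x)` is the loop formula.  Then `∀x (𝐋(x) → H_j(x))`
is valid for every BFS iterate `H_j` — in particular for the formula `H(x)`
produced by the BFS algorithm. -/
theorem bfs_loop_maximal
    (Struct D Clause : Type) (A B : Clause → Struct → D → Prop)
    (U : Struct → Prop) (L : Struct → D → Prop)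
    (Loop : Set Clause)
    (hLoop : ∀ c ∈ Loop, ∀ (s : Struct) (d : D),
        U s ∧ B c s d → ¬ L s d ∧ ∃ c' ∈ Loop, A c' s d) :
    ∀ (j : ℕ) (s : Struct) (d : D),
      (∃ c ∈ Loop, A c s d) → Hbfs Struct D Clause A B U L j s d := by
  intro j
  induction j with
  | zero => intro s d _; trivial
  | succ i ih =>
    rintro s d ⟨c, hc, hA⟩
    exact ⟨c, fun s' d' h => ⟨(hLoop c hc s' d' h).1, ih s' d' (hLoop c hc s' d' h).2⟩, hA⟩
end

section
/- If a temporal model M (over constant domain) satisfies ◇l for a ground literal l at moment 0, satisfies □(A_i → ○B_i) for ground merged step clauses i = 1,…,n, satisfies □U, and the loop side conditions U ∧ B_i ⊨ ¬l and U ∧ B_i ⊨ ⋁_{j=1}^n A_j hold for all i, then: if additionally M ⊨ A_k at some moment m for some k, then M ⊨ □¬l from moment m+1 onwards, i.e., l is false at all moments > m. -/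
/-- Propagation along a ground loop: let `M` be a temporal model (constant
domain, states `M : ℕ → Struct` with `Struct` the type of classical structures),
satisfying `◇l` at moment 0, `□(Aᵢ → ○Bᵢ)` for ground merged step clauses
`i = 1,…,n`, and `□U`, and suppose the loop side conditions `U ∧ Bᵢ ⊨ ¬l` and
`U ∧ Bᵢ ⊨ ⋁ⱼ Aⱼ` hold (classical entailment).  If additionally `Aₖ` holds at
some moment `m`, then `l` is false at all moments `> m`. -/
theorem ground_loop_propagation
    (Struct : Type) (n : ℕ) (U : Set (Struct → Prop))
    (A B : Fin n → Struct → Prop) (l : Struct → Prop)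
    (M : ℕ → Struct)
    (hev : ∃ m : ℕ, l (M m))
    (hstep : ∀ (i : Fin n) (t : ℕ), A i (M t) → B i (M (t+1)))
    (hU : ∀ t : ℕ, ∀ u ∈ U, u (M t))
    (hside1 : ∀ (i : Fin n) (s : Struct), (∀ u ∈ U, u s) → B i s → ¬ l s)
    (hside2 : ∀ (i : Fin n) (s : Struct), (∀ u ∈ U, u s) → B i s → ∃ j, A j s)
    (k : Fin n) (m : ℕ) (hA : A k (M m)) :
    ∀ t : ℕ, m < t → ¬ l (M t) := by
  have key : ∀ t : ℕ, m < t → ∃ i, B i (M t) := by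
    intro t ht
    induction t with
    | zero => omega
    | succ t ih =>
      rcases Nat.lt_or_ge m t with h | h
      · obtain ⟨i, hB⟩ := ih h
        obtain ⟨j, hAj⟩ := hside2 i (M t) (hU t) hB
        exact ⟨j, hstep j t hAj⟩
      · have : m = t := by omega
        subst this
        exact ⟨k, hstep k m hA⟩
  intro t ht
  obtain ⟨i, hB⟩ := key t ht
  exact hside1 i (M t) (hU t) hB
end

section
/- Reduction of extended monodic problems: let XP = P ∪ X be an extended monodic temporal problem, where X is a set of first-order formulae built from temporal atoms ○^i P(t₁,…,t_n) with nesting depth at most k, and let P′ = ⟨I′, U, S, E⟩ be the monodic problem obtained by the described reduction (introducing predicates P⁰,…,P^k encoding the first k+1 states into the initial part I′). Then XP is satisfiable (over constant domains) if and only if P′ is satisfiable. -/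
/-- An interpretation, at one moment, of a signature of predicates `Pred` with
arities `ar` over a domain `D`. -/
abbrev TStruct (Pred : Type) (ar : Pred → ℕ) (D : Type) :=
  ∀ p : Pred, (Fin (ar p) → D) → Prop

/-- A (semantic) first-order sentence over the signature: its truth condition in
any single-moment structure with any interpretation of the constants `Con`. -/
abbrev Sent (Pred : Type) (ar : Pred → ℕ) (Con : Type) :=
  ∀ D : Type, TStruct Pred ar D → (Con → D) → Prop

/-- A (semantic) formula of the extended part `X`: built from temporal atoms
`○^i P(t₁,…,t_n)` with `i ≤ k`, its truth at moment 0 depends only on the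
states at moments `0,…,k`. -/
abbrev XSent (Pred : Type) (ar : Pred → ℕ) (Con : Type) (k : ℕ) :=
  ∀ D : Type, (Fin (k+1) → TStruct Pred ar D) → (Con → D) → Prop

/-- Truth of a literal `(p, b)` (at most unary, applied to `d`). -/
def litHolds {Pred : Type} {ar : Pred → ℕ} {D : Type}
    (st : TStruct Pred ar D) (l : Pred × Bool) (d : D) : Prop :=
  st l.1 (fun _ => d) ↔ l.2 = true

/-- Reduction of extended monodic problems (Theorem on Reduction of Extended
Problems): an extended monodic temporal problem `XP = ⟨I, U, S, E⟩ ∪ X`, where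
`X` uses only the operator `○` with nesting depth at most `k`, is satisfiable
over constant domains iff the monodic problem `P′ = ⟨I′, U, S, E⟩` is, where
`I′` encodes the first `k+1` states by fresh predicate copies `P⁰,…,P^k`
(interpreted here by `J' : Fin (k+1) → TStruct …`, constrained only at moment 0):
`I′` contains `[φ]⁰` for `φ ∈ I`; `⋀ᵢ [φ]ⁱ` for `φ ∈ U`; the shifted step
conditions `∀x (Pⁱ(x) → Q^{i+1}(x))`; the surrogate versions `ψ′` of `ψ ∈ X`;
and `∀x̄ (P(x̄) ↔ P^k(x̄))` for each original predicate. -/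
theorem extended_monodic_reduction
    (Pred : Type) (ar : Pred → ℕ) (Con : Type) (k : ℕ)
    (Iset Uset : Set (Sent Pred ar Con))
    (S : Set ((Pred × Bool) × (Pred × Bool)))
    (E : Set (Pred × Bool))
    (X : Set (XSent Pred ar Con k))
    (hS : ∀ cl ∈ S, ar cl.1.1 ≤ 1 ∧ ar cl.2.1 ≤ 1)
    (hE : ∀ e ∈ E, ar e.1 ≤ 1) :
    -- satisfiability of XP
    (∃ (D : Type) (_ : Nonempty D) (J : ℕ → TStruct Pred ar D) (cI : Con → D),
        (∀ φ ∈ Iset, φ D (J 0) cI) ∧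
        (∀ φ ∈ Uset, ∀ n : ℕ, φ D (J n) cI) ∧
        (∀ cl ∈ S, ∀ (n : ℕ) (d : D),
            litHolds (J n) cl.1 d → litHolds (J (n+1)) cl.2 d) ∧
        (∀ e ∈ E, ∀ (n : ℕ) (d : D), ∃ m, n ≤ m ∧ litHolds (J m) e d) ∧
        (∀ ψ ∈ X, ψ D (fun i : Fin (k+1) => J i.1) cI)) ↔
    -- satisfiability of P′
    (∃ (D : Type) (_ : Nonempty D) (J : ℕ → TStruct Pred ar D)
        (J' : Fin (k+1) → TStruct Pred ar D) (cI : Con → D),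
        -- the initial part I′, true at moment 0:
        (∀ φ ∈ Iset, φ D (J' 0) cI) ∧
        (∀ φ ∈ Uset, ∀ i : Fin (k+1), φ D (J' i) cI) ∧
        (∀ cl ∈ S, ∀ (i : Fin k) (d : D),
            litHolds (J' i.castSucc) cl.1 d → litHolds (J' i.succ) cl.2 d) ∧
        (∀ ψ ∈ X, ψ D J' cI) ∧
        (∀ (p : Pred) (args : Fin (ar p) → D), J' (Fin.last k) p args ↔ J 0 p args) ∧
        -- the universal, step, and eventuality parts of P′ (same as those of P):
        (∀ φ ∈ Uset, ∀ n : ℕ, φ D (J n) cI) ∧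
        (∀ cl ∈ S, ∀ (n : ℕ) (d : D),
            litHolds (J n) cl.1 d → litHolds (J (n+1)) cl.2 d) ∧
        (∀ e ∈ E, ∀ (n : ℕ) (d : D), ∃ m, n ≤ m ∧ litHolds (J m) e d)) := by
  constructor
  · rintro ⟨D, hne, J, cI, hI, hU, hSt, hEv, hX⟩
    refine ⟨D, hne, fun n => J (n + k), fun i => J i.1, cI, ?_, ?_, ?_, ?_, ?_, ?_, ?_, ?_⟩
    · exact hI
    · exact fun φ hφ i => hU φ hφ i.1
    · intro cl hcl i d h
      simpa using hSt cl hcl i.1 d (by simpa using h)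
    · exact hX
    · intro p args
      simp [Fin.last]
    · exact fun φ hφ n => hU φ hφ (n + k)
    · intro cl hcl n d h
      have := hSt cl hcl (n + k) d h
      simpa [Nat.add_right_comm] using this
    · intro e he n d
      obtain ⟨m, hm, hl⟩ := hEv e he (n + k) d
      exact ⟨m - k, by omega, by simpa [Nat.sub_add_cancel (by omega : k ≤ m)] using hl⟩
  · rintro ⟨D, hne, J, J', cI, hI, hU', hSt', hX, hAg, hU, hSt, hEv⟩
    set K : ℕ → TStruct Pred ar D :=
      fun n => if h : n ≤ k then J' ⟨n, by omega⟩ else J (n - k) with hK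
    have hKle : ∀ n (h : n ≤ k), K n = J' ⟨n, by omega⟩ := by
      intro n h; simp [hK, h]
    have hKgt : ∀ n, k < n → K n = J (n - k) := by
      intro n h; simp [hK, Nat.not_le.mpr h]
    refine ⟨D, hne, K, cI, ?_, ?_, ?_, ?_, ?_⟩
    · intro φ hφ
      rw [hKle 0 (Nat.zero_le k)]
      exact hI φ hφ
    · intro φ hφ n
      by_cases h : n ≤ k
      · rw [hKle n h]; exact hU' φ hφ _
      · rw [hKgt n (by omega)]; exact hU φ hφ _
    · intro cl hcl n d h
      by_cases h1 : n + 1 ≤ k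
      · rw [hKle n (by omega)] at h
        rw [hKle (n+1) h1]
        have := hSt' cl hcl ⟨n, by omega⟩ d
        simp only [Fin.castSucc_mk, Fin.succ_mk] at this
        exact this h
      · by_cases h2 : n ≤ k
        · -- n = k
          have hn : n = k := by omega
          rw [hKle n h2] at h
          rw [hKgt (n+1) (by omega)]
          have hfin : (⟨n, by omega⟩ : Fin (k+1)) = Fin.last k := by
            simp [Fin.ext_iff, Fin.last, hn]
          rw [hfin] at h
          have h0 : litHolds (J 0) cl.1 d := by
            unfold litHolds at h ⊢
            rw [← hAg cl.1.1]
            exact h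
          have hstep := hSt cl hcl 0 d h0
          have h1' : n + 1 - k = 1 := by omega
          rw [h1']
          simpa using hstep
        · rw [hKgt n (by omega)] at h
          rw [hKgt (n+1) (by omega)]
          have := hSt cl hcl (n - k) d h
          have hn : n + 1 - k = n - k + 1 := by omega
          rw [hn]; exact this
    · intro e he n d
      obtain ⟨m, hm, hl⟩ := hEv e he (n+1) d
      refine ⟨m + k, by omega, ?_⟩
      rw [hKgt (m + k) (by omega)]
      simpa using hl
    · intro ψ hψ
      have : (fun i : Fin (k+1) => K i.1) = J' := by
        funext i
        rw [hKle i.1 (by omega)]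
      rw [this]
      exact hX ψ hψ
end

section
/- Each derived step clause is a logical consequence of its premises over constant domains: if a temporal model M (constant domain) satisfies □∀x (P_j(x) → ○M_j(x)) for j = 1,…,k, then M satisfies (a) □(∀x (P_1(x) ∨ … ∨ P_k(x)) → ○∀x (M_1(x) ∨ … ∨ M_k(x))), (b) □(∃x (P_1(x) ∧ … ∧ P_k(x)) → ○∃x (M_1(x) ∧ … ∧ M_k(x))), and (c) □(P_j(c) → ○M_j(c)) for every constant c and every j. Moreover, over expanding domains, (b) and (c) remain logical consequences, but (a) does not. -/
/-- Derived step clauses are logical consequences of their premises.  Given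
original non-ground step clauses `P_j(x) ⟹ ○M_j(x)` (`j = 1,…,k`, represented by
their interpretations `P Q : Fin k → ℕ → D → Prop`) true in a temporal model:
over constant domains, the derived clauses
(a) `□(∀x ⋁ⱼ P_j(x) → ○∀x ⋁ⱼ M_j(x))`,
(b) `□(∃x ⋀ⱼ P_j(x) → ○∃x ⋀ⱼ M_j(x))`, and
(c) `□(P_j(c) → ○M_j(c))` for each constant `c`
all hold; over expanding domains (`Dom n ⊆ Dom m` for `n ≤ m`, quantifiers at `n`
ranging over `Dom n`, constants rigid and present from moment 0), (b) and (c)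
still hold, but (a) fails: there is a countermodel. -/
theorem derived_step_clauses (k : ℕ) :
    (∀ (D : Type), Nonempty D → ∀ (P Q : Fin k → ℕ → D → Prop) (c : D),
        (∀ (j : Fin k) (n : ℕ) (d : D), P j n d → Q j (n+1) d) →
        ((∀ n : ℕ, (∀ d : D, ∃ j, P j n d) → ∀ d : D, ∃ j, Q j (n+1) d) ∧
         (∀ n : ℕ, (∃ d : D, ∀ j, P j n d) → ∃ d : D, ∀ j, Q j (n+1) d) ∧
         (∀ (j : Fin k) (n : ℕ), P j n c → Q j (n+1) c))) ∧
    (∀ (D : Type) (Dom : ℕ → Set D) (P Q : Fin k → ℕ → D → Prop) (c : D),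
        (∀ n m, n ≤ m → Dom n ⊆ Dom m) → c ∈ Dom 0 →
        (∀ (j : Fin k) (n : ℕ), ∀ d ∈ Dom n, P j n d → Q j (n+1) d) →
        ((∀ n : ℕ, (∃ d ∈ Dom n, ∀ j, P j n d) → ∃ d ∈ Dom (n+1), ∀ j, Q j (n+1) d) ∧
         (∀ (j : Fin k) (n : ℕ), P j n c → Q j (n+1) c))) ∧
    (∃ (D : Type) (Dom : ℕ → Set D) (P Q : ℕ → D → Prop),
        (∀ n, (Dom n).Nonempty) ∧
        (∀ n m, n ≤ m → Dom n ⊆ Dom m) ∧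
        (∀ n : ℕ, ∀ d ∈ Dom n, P n d → Q (n+1) d) ∧
        (∃ n : ℕ, (∀ d ∈ Dom n, P n d) ∧ ¬ (∀ d ∈ Dom (n+1), Q (n+1) d))) := by
  refine ⟨?_, ?_, ?_⟩
  · intro D _ P Q c h
    exact ⟨fun n hall d => (hall d).imp (fun j hp => h j n d hp),
           fun n ⟨d, hd⟩ => ⟨d, fun j => h j n d (hd j)⟩,
           fun j n hp => h j n c hp⟩
  · intro D Dom P Q c hmono hc h
    refine ⟨fun n ⟨d, hd, hall⟩ =>
      ⟨d, hmono n (n+1) (Nat.le_succ n) hd, fun j => h j n d hd (hall j)⟩,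
      fun j n hp => h j n c (hmono 0 n (Nat.zero_le n) hc) hp⟩
  · refine ⟨Bool, fun n => {d | d = false ∨ 1 ≤ n}, fun n _ => n = 0,
      fun _ d => d = false, fun n => ⟨false, Or.inl rfl⟩, ?_, ?_, 0, fun d _ => rfl, ?_⟩
    · intro n m hnm d hd
      exact hd.imp id (fun h => h.trans hnm)
    · rintro n d hd rfl
      rcases hd with h | h
      · exact h
      · omega
    · exact fun h => by simpa using h true (Or.inr le_rfl)
end
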